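/- arXiv:1802.06478 — 8 statements merged into one kernel-verified Lean document; each statement's English description precedes it below -/
import Mathlib

section
/- Let S be a maximal independent set in G, D a subset of S, and A a subset of V \ S. If A ⊆ F(D) and A is a maximal independent set of the induced subgraph G[D ∪ F(D)], then (S \ D) ∪ A is a maximal independent set of G. -/
open Finset

variable {V : Type*}

/-- `S` is an independent set in `G`: no two vertices of `S` are adjacent. -/
def Indep (G : SimpleGraph V) (S : Finset V) : Prop :=
  ∀ u ∈ S, ∀ v ∈ S, ¬ G.Adj u v

/-- `S` is a dominating set in `G`: every vertex outside `S` has a neighbor in `S`. -/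
def Dominating (G : SimpleGraph V) (S : Finset V) : Prop :=
  ∀ v, v ∉ S → ∃ u ∈ S, G.Adj u v

/-- `S` is a maximal independent set (w.r.t. set inclusion) in `G`. -/
def MaxIndep (G : SimpleGraph V) (S : Finset V) : Prop :=
  Indep G S ∧ ∀ T, Indep G T → S ⊆ T → T = S

/-- The tightness of a vertex `v` w.r.t. a solution `S`: the number of neighbors of `v` in `S`. -/
def tight [Fintype V] [DecidableEq V] (G : SimpleGraph V) [DecidableRel G.Adj]
    (S : Finset V) (v : V) : ℕ :=
  (G.neighborFinset v ∩ S).card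

/-- `F(D)`: the non-solution vertices all of whose solution neighbors lie in `D`. -/
def FD [Fintype V] [DecidableEq V] (G : SimpleGraph V) [DecidableRel G.Adj]
    (S D : Finset V) : Finset V :=
  Finset.univ.filter (fun v => v ∉ S ∧ G.neighborFinset v ∩ S ⊆ D)

/-- `A` is a maximal independent set of the subgraph of `G` induced on `W`. -/
def MaxIndepIn (G : SimpleGraph V) (W A : Finset V) : Prop :=
  A ⊆ W ∧ Indep G A ∧ ∀ T ⊆ W, Indep G T → A ⊆ T → T = A

/-- `S` is `k`-minimal: no `k`-swap yields a strictly smaller solution. -/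
def KMinimal [Fintype V] [DecidableEq V] (G : SimpleGraph V) (S : Finset V) (k : ℕ) : Prop :=
  ¬ ∃ D A : Finset V, D ⊆ S ∧ D.card = k ∧ A ⊆ Finset.univ \ S ∧ A.Nonempty ∧
      MaxIndep G ((S \ D) ∪ A) ∧ ((S \ D) ∪ A).card < S.card

theorem stmt_4 [Fintype V] [DecidableEq V] (G : SimpleGraph V) [DecidableRel G.Adj]
    (S D A : Finset V) (hS : MaxIndep G S) (hD : D ⊆ S)
    (hA : A ⊆ FD G S D) (hAmax : MaxIndepIn G (D ∪ FD G S D) A) :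
    MaxIndep G ((S \ D) ∪ A) := by
  obtain ⟨hSind, hSmax⟩ := hS
  obtain ⟨hAsub, hAind, hAmax'⟩ := hAmax
  constructor
  · intro u hu v hv huv
    simp only [mem_union, mem_sdiff] at hu hv
    rcases hu with ⟨huS, huD⟩ | huA
    · rcases hv with ⟨hvS, hvD⟩ | hvA
      · exact hSind u huS v hvS huv
      · have h := hA hvA
        simp only [FD, mem_filter] at h
        exact huD (h.2.2 (by simp [SimpleGraph.mem_neighborFinset, mem_inter, huS, huv.symm]))
    · rcases hv with ⟨hvS, hvD⟩ | hvA
      · have h := hA huA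
        simp only [FD, mem_filter] at h
        exact hvD (h.2.2 (by simp [SimpleGraph.mem_neighborFinset, mem_inter, hvS, huv]))
      · exact hAind u huA v hvA huv
  · intro T hT hsub
    apply Finset.Subset.antisymm _ hsub
    intro w hw
    by_contra hwnot
    have hwFD : w ∈ D ∪ FD G S D := by
      by_cases hwS : w ∈ S
      · refine mem_union_left _ ?_
        by_contra hwD
        exact hwnot (by simp [mem_union, mem_sdiff, hwS, hwD])
      · refine mem_union_right _ ?_
        simp only [FD, mem_filter, mem_univ, true_and]
        refine ⟨hwS, ?_⟩
        intro u hu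
        simp only [mem_inter, SimpleGraph.mem_neighborFinset] at hu
        by_contra huD
        have huT : u ∈ T := hsub (by simp [mem_union, mem_sdiff, hu.2, huD])
        exact hT u huT w hw hu.1.symm
    have heq : insert w A = A := by
      apply hAmax' (insert w A)
      · intro x hx
        rcases mem_insert.mp hx with rfl | hx
        · exact hwFD
        · exact hAsub hx
      · intro u hu v hv huv
        have huT : u ∈ T := by
          rcases mem_insert.mp hu with rfl | hu
          · exact hw
          · exact hsub (mem_union_right _ hu)
        have hvT : v ∈ T := by
          rcases mem_insert.mp hv with rfl | hv
          · exact hw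
          · exact hsub (mem_union_right _ hv)
        exact hT u huT v hvT huv
      · exact subset_insert _ _
    exact hwnot (mem_union_right _ (heq ▸ mem_insert_self w A))
end

section
/- Suppose S is a maximal independent set in G that is k'-minimal for every k' ∈ {1, …, k−1} for some integer k ≥ 2, and let D be a k-subset of S. If there exists a maximal independent set A of G[D ∪ F(D)] with A ⊆ F(D) and |A| < |D|, then the induced subgraph G[D ∪ F(D)] is connected. -/
open Finset

variable {V : Type*}

lemma indep_insert_cases [DecidableEq V] {G : SimpleGraph V} {A : Finset V} {v : V}
    (hA : Indep G A) (h : ¬ Indep G (insert v A)) : ∃ a ∈ A, G.Adj v a := by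
  by_contra hc
  push_neg at hc
  apply h
  intro u hu w hw
  rcases Finset.mem_insert.1 hu with rfl | hu
  · rcases Finset.mem_insert.1 hw with rfl | hw
    · exact G.irrefl
    · exact hc w hw
  · rcases Finset.mem_insert.1 hw with hw | hw
    · intro hadj; rw [hw] at hadj; exact hc u hu hadj.symm
    · exact hA u hu w hw

lemma maxIndep_dominating [DecidableEq V] {G : SimpleGraph V} {S : Finset V} (hS : MaxIndep G S) :
    Dominating G S := by
  intro v hv
  by_contra h
  push_neg at h
  have hnind : ¬ Indep G (insert v S) := by
    intro hind
    exact hv ((hS.2 _ hind (Finset.subset_insert _ _)) ▸ Finset.mem_insert_self v S)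
  obtain ⟨a, ha, hadj⟩ := indep_insert_cases hS.1 hnind
  exact h a ha hadj.symm

lemma maxIndepIn_dom [DecidableEq V] {G : SimpleGraph V} {W A : Finset V} (h : MaxIndepIn G W A)
    {v : V} (hvW : v ∈ W) (hvA : v ∉ A) : ∃ a ∈ A, G.Adj v a := by
  apply indep_insert_cases h.2.1
  intro hind
  exact hvA ((h.2.2 (insert v A) (Finset.insert_subset hvW h.1) hind
    (Finset.subset_insert _ _)) ▸ Finset.mem_insert_self v A)

lemma mem_FD_iff [Fintype V] [DecidableEq V] {G : SimpleGraph V} [DecidableRel G.Adj]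
    {S D : Finset V} {v : V} :
    v ∈ FD G S D ↔ v ∉ S ∧ G.neighborFinset v ∩ S ⊆ D := by
  simp [FD]

lemma swap_contra [Fintype V] [DecidableEq V] (G : SimpleGraph V) [DecidableRel G.Adj]
    (S D A : Finset V) (k : ℕ) (hS : MaxIndep G S)
    (hmin : ∀ k', 1 ≤ k' → k' < k → KMinimal G S k')
    (hD : D ⊆ S) (hDk : D.card = k)
    (hA : A ⊆ FD G S D) (hAmax : MaxIndepIn G (D ∪ FD G S D) A)
    (P : Finset V)
    (hedge : ∀ u ∈ P, ∀ v ∈ (D ∪ FD G S D) \ P, ¬ G.Adj u v)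
    (hD1 : (D ∩ P).Nonempty) (hD2 : (D \ P).Nonempty)
    (hc : (A ∩ P).card < (D ∩ P).card) : False := by
  set W := D ∪ FD G S D with hWdef
  set D₁ := D ∩ P with hD₁def
  set A₁ := A ∩ P with hA₁def
  have hAnS : ∀ a ∈ A, a ∉ S := fun a ha => (mem_FD_iff.1 (hA ha)).1
  have hD₁S : D₁ ⊆ S := (Finset.inter_subset_left).trans hD
  -- vertices of W inside P that are not in A have a neighbor in A₁
  have hnbr : ∀ v ∈ W, v ∈ P → v ∉ A → ∃ a ∈ A₁, G.Adj v a := by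
    intro v hvW hvP hvA
    obtain ⟨a, ha, hadj⟩ := maxIndepIn_dom hAmax hvW hvA
    have haP : a ∈ P := by
      by_contra haP
      exact hedge v hvP a (Finset.mem_sdiff.2 ⟨hAmax.1 ha, haP⟩) hadj
    exact ⟨a, Finset.mem_inter.2 ⟨ha, haP⟩, hadj⟩
  -- A₁ is nonempty
  obtain ⟨d, hd⟩ := hD1
  have hdD : d ∈ D := (Finset.mem_inter.1 hd).1
  have hdP : d ∈ P := (Finset.mem_inter.1 hd).2
  have hdA : d ∉ A := fun h => hAnS d h (hD hdD)
  obtain ⟨a₀, ha₀, _⟩ := hnbr d (Finset.mem_union_left _ hdD) hdP hdA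
  -- no cross edges between S \ D₁ and A₁
  have hcross : ∀ u ∈ S \ D₁, ∀ w ∈ A₁, ¬ G.Adj u w := by
    intro u hu w hw hadj
    obtain ⟨huS, huD₁⟩ := Finset.mem_sdiff.1 hu
    obtain ⟨hwA, hwP⟩ := Finset.mem_inter.1 hw
    have hwFD := mem_FD_iff.1 (hA hwA)
    have huD : u ∈ D := hwFD.2 (Finset.mem_inter.2
      ⟨(G.mem_neighborFinset w u).2 hadj.symm, huS⟩)
    have huP : u ∉ P := fun h => huD₁ (Finset.mem_inter.2 ⟨huD, h⟩)
    exact hedge w hwP u (Finset.mem_sdiff.2 ⟨Finset.mem_union_left _ huD, huP⟩) hadj.symm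
  -- the swapped set
  have hindep : Indep G ((S \ D₁) ∪ A₁) := by
    intro u hu w hw
    rcases Finset.mem_union.1 hu with hu' | hu'
    · rcases Finset.mem_union.1 hw with hw' | hw'
      · exact hS.1 u (Finset.mem_sdiff.1 hu').1 w (Finset.mem_sdiff.1 hw').1
      · exact hcross u hu' w hw'
    · rcases Finset.mem_union.1 hw with hw' | hw'
      · intro hadj; exact hcross w hw' u hu' hadj.symm
      · exact hAmax.2.1 u (Finset.inter_subset_left hu') w (Finset.inter_subset_left hw')
  have hdom : ∀ v, v ∉ (S \ D₁) ∪ A₁ → ∃ u ∈ (S \ D₁) ∪ A₁, G.Adj u v := by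
    intro v hv
    by_cases hvS : v ∈ S
    · have hvD₁ : v ∈ D₁ := by
        by_contra h
        exact hv (Finset.mem_union_left _ (Finset.mem_sdiff.2 ⟨hvS, h⟩))
      have hvA : v ∉ A := fun h => hAnS v h hvS
      obtain ⟨a, ha, hadj⟩ := hnbr v
        (Finset.mem_union_left _ (Finset.mem_inter.1 hvD₁).1) (Finset.mem_inter.1 hvD₁).2 hvA
      exact ⟨a, Finset.mem_union_right _ ha, hadj.symm⟩
    · by_cases hvP : v ∈ P
      · by_cases hvW : v ∈ W
        · have hvA : v ∉ A := fun h => hv (Finset.mem_union_right _ (Finset.mem_inter.2 ⟨h, hvP⟩))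
          obtain ⟨a, ha, hadj⟩ := hnbr v hvW hvP hvA
          exact ⟨a, Finset.mem_union_right _ ha, hadj.symm⟩
        · -- v ∉ W, v ∉ S : v ∉ FD so it has an S-neighbor outside D
          have hvF : v ∉ FD G S D := fun h => hvW (Finset.mem_union_right _ h)
          have hns : ¬ (G.neighborFinset v ∩ S ⊆ D) := fun h => hvF (mem_FD_iff.2 ⟨hvS, h⟩)
          obtain ⟨u, hu, huD⟩ := Finset.not_subset.1 hns
          obtain ⟨hun, huS⟩ := Finset.mem_inter.1 hu
          have huD₁ : u ∉ D₁ := fun h => huD (Finset.mem_inter.1 h).1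
          exact ⟨u, Finset.mem_union_left _ (Finset.mem_sdiff.2 ⟨huS, huD₁⟩),
            ((G.mem_neighborFinset v u).1 hun).symm⟩
      · by_cases hvF : v ∈ FD G S D
        · obtain ⟨u, huS, hadj⟩ := maxIndep_dominating hS v hvS
          have huD : u ∈ D := (mem_FD_iff.1 hvF).2 (Finset.mem_inter.2
            ⟨(G.mem_neighborFinset v u).2 hadj.symm, huS⟩)
          have huP : u ∉ P := by
            intro h
            exact hedge u h v (Finset.mem_sdiff.2 ⟨Finset.mem_union_right _ hvF, hvP⟩) hadj
          have huD₁ : u ∉ D₁ := fun h => huP (Finset.mem_inter.1 h).2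
          exact ⟨u, Finset.mem_union_left _ (Finset.mem_sdiff.2 ⟨huS, huD₁⟩), hadj⟩
        · have hns : ¬ (G.neighborFinset v ∩ S ⊆ D) := fun h => hvF (mem_FD_iff.2 ⟨hvS, h⟩)
          obtain ⟨u, hu, huD⟩ := Finset.not_subset.1 hns
          obtain ⟨hun, huS⟩ := Finset.mem_inter.1 hu
          have huD₁ : u ∉ D₁ := fun h => huD (Finset.mem_inter.1 h).1
          exact ⟨u, Finset.mem_union_left _ (Finset.mem_sdiff.2 ⟨huS, huD₁⟩),
            ((G.mem_neighborFinset v u).1 hun).symm⟩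
  have hmax : MaxIndep G ((S \ D₁) ∪ A₁) := by
    refine ⟨hindep, fun T hT hsub => ?_⟩
    apply Finset.Subset.antisymm _ hsub
    intro t ht
    by_contra htS'
    obtain ⟨u, hu, hadj⟩ := hdom t htS'
    exact hT u (hsub hu) t ht hadj
  -- cardinalities
  have hdisj : Disjoint (S \ D₁) A₁ := by
    rw [Finset.disjoint_left]
    intro x hx hxA
    exact hAnS x (Finset.inter_subset_left hxA) (Finset.mem_sdiff.1 hx).1
  have hcard1 : ((S \ D₁) ∪ A₁).card = S.card - D₁.card + A₁.card := by
    rw [Finset.card_union_of_disjoint hdisj, Finset.card_sdiff_of_subset hD₁S]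
  have hD₁leS : D₁.card ≤ S.card := Finset.card_le_card hD₁S
  have hlt : ((S \ D₁) ∪ A₁).card < S.card := by
    rw [hcard1]; omega
  have hD₁pos : 1 ≤ D₁.card := Finset.card_pos.2 ⟨d, hd⟩
  have hD₁ssub : D₁ ⊂ D := by
    obtain ⟨e, he⟩ := hD2
    obtain ⟨heD, heP⟩ := Finset.mem_sdiff.1 he
    exact Finset.ssubset_iff_of_subset Finset.inter_subset_left |>.2
      ⟨e, heD, fun h => heP (Finset.mem_inter.1 h).2⟩
  have hD₁lt : D₁.card < k := hDk ▸ Finset.card_lt_card hD₁ssub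
  exact hmin D₁.card hD₁pos hD₁lt ⟨D₁, A₁, hD₁S, rfl,
    fun a ha => Finset.mem_sdiff.2 ⟨Finset.mem_univ a, hAnS a (Finset.inter_subset_left ha)⟩,
    ⟨a₀, ha₀⟩, hmax, hlt⟩

theorem stmt_6 [Fintype V] [DecidableEq V] (G : SimpleGraph V) [DecidableRel G.Adj]
    (S D A : Finset V) (k : ℕ) (hk : 2 ≤ k) (hS : MaxIndep G S)
    (hmin : ∀ k', 1 ≤ k' → k' < k → KMinimal G S k')
    (hD : D ⊆ S) (hDk : D.card = k)
    (hA : A ⊆ FD G S D) (hAmax : MaxIndepIn G (D ∪ FD G S D) A)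
    (hcard : A.card < D.card) :
    (G.induce (↑(D ∪ FD G S D) : Set V)).Connected := by
  classical
  set W := D ∪ FD G S D with hWdef
  have hDne : D.Nonempty := Finset.card_pos.1 (by omega)
  obtain ⟨d₀, hd₀⟩ := hDne
  have hd₀W : d₀ ∈ W := Finset.mem_union_left _ hd₀
  set W₁ := W.filter (fun w =>
    ∃ hw : w ∈ W, (G.induce (↑W : Set V)).Reachable ⟨d₀, by exact hd₀W⟩ ⟨w, hw⟩) with hW₁def
  have hd₀W₁ : d₀ ∈ W₁ := Finset.mem_filter.2 ⟨hd₀W, hd₀W, SimpleGraph.Reachable.refl _⟩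
  -- no edges from W₁ to W \ W₁
  have hedge₁ : ∀ u ∈ W₁, ∀ v ∈ W \ W₁, ¬ G.Adj u v := by
    intro u hu v hv hadj
    obtain ⟨huW, hwu, hreach⟩ := Finset.mem_filter.1 hu
    obtain ⟨hvW, hvW₁⟩ := Finset.mem_sdiff.1 hv
    apply hvW₁
    refine Finset.mem_filter.2 ⟨hvW, hvW, ?_⟩
    have hadj' : (G.induce (↑W : Set V)).Adj ⟨u, hwu⟩ ⟨v, hvW⟩ := hadj
    exact hreach.trans hadj'.reachable
  rcases Finset.eq_empty_or_nonempty (W \ W₁) with hW₂ | hW₂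
  · -- everything reachable from d₀ : connected
    have hsub : W ⊆ W₁ := by
      intro w hw
      by_contra h
      exact (Finset.eq_empty_iff_forall_notMem.1 hW₂ w) (Finset.mem_sdiff.2 ⟨hw, h⟩)
    have hreach : ∀ w : (↑W : Set V),
        (G.induce (↑W : Set V)).Reachable ⟨d₀, by exact hd₀W⟩ w := by
      rintro ⟨w, hw⟩
      have hw' : w ∈ W := hw
      obtain ⟨hw'', hr⟩ := (Finset.mem_filter.1 (hsub hw')).2
      exact hr
    rw [SimpleGraph.connected_iff]
    exact ⟨fun u v => (hreach u).symm.trans (hreach v), ⟨⟨d₀, by exact hd₀W⟩⟩⟩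
  · -- two nonempty sides : contradiction via swap_contra
    exfalso
    -- D meets the second side
    have hDW₂ : ∃ u, u ∈ D ∧ u ∈ W \ W₁ := by
      obtain ⟨w, hw⟩ := hW₂
      obtain ⟨hwW, hwW₁⟩ := Finset.mem_sdiff.1 hw
      rcases Finset.mem_union.1 hwW with hwD | hwF
      · exact ⟨w, hwD, hw⟩
      · obtain ⟨u, huS, hadj⟩ := maxIndep_dominating hS w (mem_FD_iff.1 hwF).1
        have huD : u ∈ D := (mem_FD_iff.1 hwF).2 (Finset.mem_inter.2
          ⟨(G.mem_neighborFinset w u).2 hadj.symm, huS⟩)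
        have huW₁ : u ∉ W₁ := fun h => hedge₁ u h w hw hadj
        exact ⟨u, huD, Finset.mem_sdiff.2 ⟨Finset.mem_union_left _ huD, huW₁⟩⟩
    obtain ⟨u₂, hu₂D, hu₂W₂⟩ := hDW₂
    have hu₂W₁ : u₂ ∉ W₁ := (Finset.mem_sdiff.1 hu₂W₂).2
    -- card splits
    have hAW : A ⊆ W := hAmax.1
    have hDW : D ⊆ W := Finset.subset_union_left
    have hAsplit : (A ∩ W₁).card + (A ∩ (W \ W₁)).card = A.card := by
      have : A ∩ (W \ W₁) = A \ W₁ := by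
        ext x
        simp only [Finset.mem_inter, Finset.mem_sdiff]
        exact ⟨fun ⟨h1, _, h3⟩ => ⟨h1, h3⟩, fun ⟨h1, h2⟩ => ⟨h1, hAW h1, h2⟩⟩
      rw [this, Finset.card_inter_add_card_sdiff]
    have hDsplit : (D ∩ W₁).card + (D ∩ (W \ W₁)).card = D.card := by
      have : D ∩ (W \ W₁) = D \ W₁ := by
        ext x
        simp only [Finset.mem_inter, Finset.mem_sdiff]
        exact ⟨fun ⟨h1, _, h3⟩ => ⟨h1, h3⟩, fun ⟨h1, h2⟩ => ⟨h1, hDW h1, h2⟩⟩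
      rw [this, Finset.card_inter_add_card_sdiff]
    have hcase : (A ∩ W₁).card < (D ∩ W₁).card ∨
        (A ∩ (W \ W₁)).card < (D ∩ (W \ W₁)).card := by omega
    rcases hcase with hlt | hlt
    · exact swap_contra G S D A k hS hmin hD hDk hA hAmax W₁ hedge₁
        ⟨d₀, Finset.mem_inter.2 ⟨hd₀, hd₀W₁⟩⟩
        ⟨u₂, Finset.mem_sdiff.2 ⟨hu₂D, hu₂W₁⟩⟩ hlt
    · have hedge₂ : ∀ u ∈ W \ W₁, ∀ v ∈ W \ (W \ W₁), ¬ G.Adj u v := by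
        intro u hu v hv hadj
        obtain ⟨hvW, hvn⟩ := Finset.mem_sdiff.1 hv
        have hvW₁ : v ∈ W₁ := by
          by_contra h
          exact hvn (Finset.mem_sdiff.2 ⟨hvW, h⟩)
        exact hedge₁ v hvW₁ u hu hadj.symm
      have hd₀n : d₀ ∉ W \ W₁ := fun h => (Finset.mem_sdiff.1 h).2 hd₀W₁
      exact swap_contra G S D A k hS hmin hD hDk hA hAmax (W \ W₁) hedge₂
        ⟨u₂, Finset.mem_inter.2 ⟨hu₂D, hu₂W₂⟩⟩
        ⟨d₀, Finset.mem_sdiff.2 ⟨hd₀, hd₀n⟩⟩ hlt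
end

section
/- Let S be a maximal independent set and D = {x, y} a 2-subset of S. If there exists a non-solution vertex v ∈ F(D) such that (S \ D) ∪ {v} is a maximal independent set, then F(D) contains a 2-tight vertex. -/
open Finset

variable {V : Type*}

theorem MaxIndep.exists_adj_of_notMem [DecidableEq V] {G : SimpleGraph V} {T : Finset V}
    (hT : MaxIndep G T) {z : V} (hz : z ∉ T) : ∃ u ∈ T, G.Adj z u := by
  by_contra! hnadj
  have hindep : Indep G (insert z T) := by
    intro a ha b hb
    rcases mem_insert.mp ha with rfl | haT <;> rcases mem_insert.mp hb with rfl | hbT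
    · exact G.irrefl
    · exact hnadj b hbT
    · exact fun hab => hnadj a haT hab.symm
    · exact hT.1 a haT b hbT
  exact hz (hT.2 _ hindep (subset_insert z T) ▸ mem_insert_self z T)

/-- Each `z ∈ D` lies outside the swapped solution, so by maximality it has a neighbour there;
since `S` is independent, that neighbour can only be `v`. -/
theorem neighborFinset_inter_eq_of_maxIndep_swap [Fintype V] [DecidableEq V]
    {G : SimpleGraph V} [DecidableRel G.Adj] {S D : Finset V} {v : V} (hS : Indep G S)
    (hD : D ⊆ S) (hv : v ∈ FD G S D) (hT : MaxIndep G ((S \ D) ∪ {v})) :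
    G.neighborFinset v ∩ S = D := by
  simp only [FD, mem_filter, mem_univ, true_and] at hv
  refine Subset.antisymm hv.2 fun z hz => ?_
  have hzT : z ∉ (S \ D) ∪ {v} := by
    simp only [mem_union, mem_sdiff, mem_singleton, not_or, not_and, not_not]
    exact ⟨fun _ => hz, fun hzv => hv.1 (hzv ▸ hD hz)⟩
  obtain ⟨u, huT, hzu⟩ := hT.exists_adj_of_notMem hzT
  rcases mem_union.mp huT with huSD | huv
  · exact absurd hzu (hS z (hD hz) u (mem_sdiff.mp huSD).1)
  · rw [mem_singleton.mp huv] at hzu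
    exact mem_inter.mpr ⟨(G.mem_neighborFinset v z).mpr hzu.symm, hD hz⟩

theorem stmt_7 [Fintype V] [DecidableEq V] (G : SimpleGraph V) [DecidableRel G.Adj]
    (S : Finset V) (x y : V) (hS : MaxIndep G S) (hxy : x ≠ y)
    (hx : x ∈ S) (hy : y ∈ S)
    (h : ∃ v ∈ FD G S {x, y}, MaxIndep G ((S \ {x, y}) ∪ {v})) :
    ∃ w ∈ FD G S {x, y}, tight G S w = 2 := by
  obtain ⟨v, hv, hT⟩ := h
  have hD : ({x, y} : Finset V) ⊆ S := insert_subset hx (singleton_subset_iff.mpr hy)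
  refine ⟨v, hv, ?_⟩
  rw [tight, neighborFinset_inter_eq_of_maxIndep_swap hS.1 hD hv hT, card_pair hxy]
end

section
/- Let S be a maximal independent set and D = {x, y} a 2-subset of S with x ≠ y. If v ∈ F(D) is such that (S \ D) ∪ {v} is a maximal independent set, then v is 2-tight, i.e., v is adjacent to both x and y. -/
open Finset

variable {V : Type*}

theorem stmt_8 [Fintype V] [DecidableEq V] (G : SimpleGraph V) [DecidableRel G.Adj]
    (S : Finset V) (x y v : V) (hS : MaxIndep G S) (hxy : x ≠ y)
    (hx : x ∈ S) (hy : y ∈ S)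
    (hv : v ∈ FD G S {x, y}) (h : MaxIndep G ((S \ {x, y}) ∪ {v})) :
    G.Adj v x ∧ G.Adj v y := by
  simp only [FD, mem_filter] at hv
  obtain ⟨-, hvS, -⟩ := hv
  set B := (S \ {x, y}) ∪ {v} with hB
  have key : ∀ z, z ∈ ({x, y} : Finset V) → z ∈ S → G.Adj v z := by
    intro z hzxy hz
    by_contra hvz
    have hzB : z ∉ B := by
      intro hzB
      rcases mem_union.mp hzB with h1 | h1
      · exact (mem_sdiff.mp h1).2 hzxy
      · exact hvS ((mem_singleton.mp h1) ▸ hz)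
    have hT : Indep G (insert z B) := by
      intro u hu w hw
      rcases mem_insert.mp hu with hu' | hu
      · rcases mem_insert.mp hw with hw' | hw
        · rw [hu', hw']; exact fun a => G.irrefl a
        · rw [hu']
          rcases mem_union.mp hw with h1 | h1
          · exact fun a => hS.1 z hz _ (mem_sdiff.mp h1).1 a
          · rw [mem_singleton.mp h1]; exact fun a => hvz a.symm
      · rcases mem_insert.mp hw with hw' | hw
        · rw [hw']
          rcases mem_union.mp hu with h1 | h1
          · exact fun a => hS.1 _ (mem_sdiff.mp h1).1 z hz a
          · rw [mem_singleton.mp h1]; exact hvz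
        · exact h.1 u hu w hw
    have := h.2 (insert z B) hT (subset_insert z B)
    exact hzB (this ▸ mem_insert_self z B)
  exact ⟨key x (mem_insert_self _ _) hx, key y (by simp) hy⟩
end

section
/- Let S be a maximal independent set, v a 2-tight vertex with solution neighbors x and y, and D = {x, y}. Then (S \ D) ∪ {v} is a maximal independent set if and only if v is adjacent to every vertex of F(D) \ {v}. -/
open Finset

variable {V : Type*}

/-! Both directions of the equivalence are instances of the characterization of maximal
independent sets as the independent dominating sets: `(S \ D) ∪ {v}` is always independent,
since `v` has no solution neighbor outside `D`, and a vertex `u ∉ S` with no solution neighbor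
outside `D` (that is, `u ∈ F(D)`) can only be dominated by `v`. -/

section

variable {G : SimpleGraph V}

theorem MaxIndep.dominating [DecidableEq V] {S : Finset V} (h : MaxIndep G S) :
    Dominating G S := by
  intro u hu
  by_contra! hc
  have hind : Indep G (insert u S) := by
    intro a ha b hb
    rcases mem_insert.1 ha with rfl | haS <;> rcases mem_insert.1 hb with rfl | hbS
    · exact G.irrefl
    · exact fun hab => hc b hbS hab.symm
    · exact hc a haS
    · exact h.1 a haS b hbS
  exact hu (h.2 _ hind (subset_insert u S) ▸ mem_insert_self u S)

theorem Indep.maxIndep {S : Finset V} (hind : Indep G S) (hdom : Dominating G S) :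
    MaxIndep G S := by
  refine ⟨hind, fun T hT hST => Subset.antisymm (fun t ht => ?_) hST⟩
  by_contra htS
  obtain ⟨u, huS, hut⟩ := hdom t htS
  exact hT u (hST huS) t ht hut

theorem maxIndep_iff_indep_and_dominating [DecidableEq V] {S : Finset V} :
    MaxIndep G S ↔ Indep G S ∧ Dominating G S :=
  ⟨fun h => ⟨h.1, h.dominating⟩, fun h => h.1.maxIndep h.2⟩

theorem Indep.sdiff_union_singleton [DecidableEq V] {S D : Finset V} {v : V}
    (hS : Indep G S) (hv : ∀ w ∈ S, G.Adj v w → w ∈ D) :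
    Indep G ((S \ D) ∪ {v}) := by
  intro a ha b hb
  simp only [mem_union, mem_sdiff, mem_singleton] at ha hb
  rcases ha with ⟨haS, haD⟩ | rfl <;> rcases hb with ⟨hbS, hbD⟩ | rfl
  · exact hS a haS b hbS
  · exact fun hab => haD (hv a haS hab.symm)
  · exact fun hab => hbD (hv b hbS hab)
  · exact G.irrefl

theorem dominating_sdiff_union_singleton_iff [Fintype V] [DecidableEq V] [DecidableRel G.Adj]
    {S D : Finset V} {v : V} (hD : ∀ d ∈ D, G.Adj v d) :
    Dominating G ((S \ D) ∪ {v}) ↔ ∀ u ∈ FD G S D, u ≠ v → G.Adj v u := by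
  simp only [Dominating, FD, mem_filter, mem_univ, true_and, mem_union, mem_sdiff,
    mem_singleton, subset_iff, mem_inter, SimpleGraph.mem_neighborFinset]
  constructor
  · rintro hdom u ⟨huS, huD⟩ huv
    obtain ⟨w, ⟨hwS, hwD⟩ | rfl, hwu⟩ := hdom u (by tauto)
    · exact absurd (huD ⟨hwu.symm, hwS⟩) hwD
    · exact hwu
  · intro hF t ht
    by_cases htS : t ∈ S
    · exact ⟨v, Or.inr rfl, hD t (by tauto)⟩
    by_cases htD : ∀ w, G.Adj t w ∧ w ∈ S → w ∈ D
    · exact ⟨v, Or.inr rfl, hF t ⟨htS, htD⟩ (by tauto)⟩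
    push Not at htD
    obtain ⟨w, ⟨htw, hwS⟩, hwD⟩ := htD
    exact ⟨w, Or.inl ⟨hwS, hwD⟩, htw.symm⟩

end

theorem stmt_9_general [Fintype V] [DecidableEq V] (G : SimpleGraph V) [DecidableRel G.Adj]
    (S : Finset V) (x y v : V) (hS : MaxIndep G S)
    (h2t : G.neighborFinset v ∩ S = {x, y}) :
    MaxIndep G ((S \ {x, y}) ∪ {v}) ↔
      ∀ u ∈ FD G S {x, y}, u ≠ v → G.Adj v u := by
  have hN : ∀ w, G.Adj v w ∧ w ∈ S ↔ w ∈ ({x, y} : Finset V) := fun w => by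
    rw [← h2t, mem_inter, SimpleGraph.mem_neighborFinset]
  rw [maxIndep_iff_indep_and_dominating,
    dominating_sdiff_union_singleton_iff fun d hd => ((hN d).2 hd).1]
  exact and_iff_right (hS.1.sdiff_union_singleton fun w hw hvw => (hN w).1 ⟨hvw, hw⟩)

theorem stmt_9 [Fintype V] [DecidableEq V] (G : SimpleGraph V) [DecidableRel G.Adj]
    (S : Finset V) (x y v : V) (hS : MaxIndep G S) (hxy : x ≠ y)
    (hx : x ∈ S) (hy : y ∈ S) (hv : v ∉ S)
    (h2t : G.neighborFinset v ∩ S = {x, y}) :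
    MaxIndep G ((S \ {x, y}) ∪ {v}) ↔
      ∀ u ∈ FD G S {x, y}, u ≠ v → G.Adj v u :=
  stmt_9_general G S x y v hS h2t
end

section
/- Let S be a maximal independent set, x ∈ S, and v ∉ S. Then (S \ {x}) ∪ {v} is a maximal independent set if and only if v is 1-tight with x as its only solution neighbor, and v is adjacent to every vertex of F({x}) \ {v}. -/
open Finset

variable {V : Type*}

/-!
Write `T = (S \ {x}) ∪ {v}`. Since `S` is independent, `T` is independent exactly when `x` is the
only neighbour of `v` in `S`. A maximal independent set is the same as an independent dominating
set, and the only vertices that `T` may fail to dominate are `x` and the vertices of `F({x})`: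
every other vertex outside `S` keeps a neighbour in `S \ {x}`. As `x` and `F({x})` have no
neighbour in `S \ {x}`, they are dominated by `T` exactly when they are adjacent to `v`.
-/

section

variable {G : SimpleGraph V}

theorem Indep.mono {S T : Finset V} (hT : Indep G T) (hST : S ⊆ T) : Indep G S :=
  fun u hu w hw => hT u (hST hu) w (hST hw)

theorem indep_insert_iff [DecidableEq V] {S : Finset V} {v : V} :
    Indep G (insert v S) ↔ Indep G S ∧ ∀ w ∈ S, ¬ G.Adj v w := by
  simp only [Indep, forall_mem_insert, G.irrefl, not_false_eq_true, true_and]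
  exact ⟨fun h => ⟨fun u hu => (h.2 u hu).2, h.1⟩,
    fun h => ⟨h.2, fun u hu => ⟨fun huv => h.2 u hu huv.symm, h.1 u hu⟩⟩⟩

theorem indep_insert_erase_iff [DecidableEq V] {S : Finset V} {x v : V} (hI : Indep G S) :
    Indep G (insert v (S.erase x)) ↔ ∀ w ∈ S, G.Adj v w → w = x := by
  rw [indep_insert_iff, and_iff_right (hI.mono (erase_subset x S))]
  simp only [mem_erase, and_imp]
  exact forall_congr' fun w => ⟨fun h hw hvw => by_contra fun hwx => h hwx hw hvw,
    fun h hwx hw hvw => hwx (h hw hvw)⟩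

variable [Fintype V] [DecidableEq V] [DecidableRel G.Adj]

theorem neighborFinset_inter_eq_singleton_iff {S : Finset V} {v x : V} (hx : x ∈ S) :
    G.neighborFinset v ∩ S = {x} ↔ G.Adj v x ∧ ∀ w ∈ S, G.Adj v w → w = x := by
  simp only [eq_singleton_iff_unique_mem, mem_inter, SimpleGraph.mem_neighborFinset, hx,
    and_true, and_imp]
  exact and_congr_right fun _ => forall_congr' fun w => Imp.swap

theorem mem_FD_singleton_iff {S : Finset V} {u x : V} :
    u ∈ FD G S {x} ↔ u ∉ S ∧ ∀ w ∈ S, G.Adj u w → w = x := by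
  simp only [FD, mem_filter, mem_univ, true_and, subset_iff, mem_inter,
    SimpleGraph.mem_neighborFinset, mem_singleton, and_imp]
  exact and_congr_right fun _ => forall_congr' fun w => Imp.swap

theorem dominating_insert_erase_iff {S : Finset V} {x v : V} (hI : Indep G S)
    (hx : x ∈ S) (hv : v ∉ S) :
    Dominating G (insert v (S.erase x)) ↔
      G.Adj v x ∧ ∀ u ∈ FD G S {x}, u ≠ v → G.Adj v u := by
  have hvx : v ≠ x := ne_of_mem_of_not_mem hx hv |>.symm
  constructor
  · intro hT
    constructor
    · obtain ⟨u, hu, hux⟩ := hT x (by simp [hvx.symm])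
      rcases mem_insert.1 hu with rfl | hu
      · exact hux
      · exact absurd hux (hI u (mem_of_mem_erase hu) x hx)
    · intro u hu huv
      obtain ⟨huS, hux⟩ := mem_FD_singleton_iff.1 hu
      obtain ⟨w, hw, hwu⟩ := hT u (by simp [huv, huS])
      rcases mem_insert.1 hw with rfl | hw
      · exact hwu
      · exact absurd (hux w (mem_of_mem_erase hw) hwu.symm) (ne_of_mem_erase hw)
  · rintro ⟨hv_adj_x, hF⟩ u hu
    have hvT : v ∈ insert v (S.erase x) := mem_insert_self v _
    by_cases hux : u = x
    · exact ⟨v, hvT, hux ▸ hv_adj_x⟩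
    have huS : u ∉ S := fun huS => hu (mem_insert_of_mem (mem_erase.2 ⟨hux, huS⟩))
    have huv : u ≠ v := fun huv => hu (huv ▸ hvT)
    by_cases huF : u ∈ FD G S {x}
    · exact ⟨v, hvT, hF u huF huv⟩
    · obtain ⟨w, hwS, huw, hwx⟩ : ∃ w ∈ S, G.Adj u w ∧ w ≠ x := by
        simpa [mem_FD_singleton_iff, huS] using huF
      exact ⟨w, mem_insert_of_mem (mem_erase.2 ⟨hwx, hwS⟩), huw.symm⟩

end

theorem stmt_13 [Fintype V] [DecidableEq V] (G : SimpleGraph V) [DecidableRel G.Adj]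
    (S : Finset V) (x v : V) (hS : MaxIndep G S) (hx : x ∈ S) (hv : v ∉ S) :
    MaxIndep G ((S \ {x}) ∪ {v}) ↔
      (G.neighborFinset v ∩ S = {x} ∧ ∀ u ∈ FD G S {x}, u ≠ v → G.Adj v u) := by
  rw [sdiff_singleton_eq_erase, union_singleton, maxIndep_iff_indep_and_dominating,
    indep_insert_erase_iff hS.1, dominating_insert_erase_iff hS.1 hx hv,
    neighborFinset_inter_eq_singleton_iff hx]
  tauto
end

section
/- Let S be a maximal independent set, D ⊆ S, and A ⊆ F(D) a maximal independent set of G[D ∪ F(D)]. Then every vertex of D has a neighbor in A; in particular, if A = {a, b} and D = {x, y, z} with a, b each 1-tight, then the three vertices x, y, z cannot all be dominated by {a, b}, yielding a contradiction. -/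
open Finset

variable {V : Type*}

theorem Indep.insert_of_forall_not_adj [DecidableEq V] {G : SimpleGraph V} {A : Finset V}
    {d : V} (hA : Indep G A) (hd : ∀ a ∈ A, ¬ G.Adj d a) : Indep G (insert d A) := by
  intro u hu v hv
  rcases mem_insert.mp hu with rfl | huA <;> rcases mem_insert.mp hv with rfl | hvA
  · exact G.irrefl
  · exact hd v hvA
  · exact fun h => hd u huA h.symm
  · exact hA u huA v hvA

theorem MaxIndepIn.exists_adj [DecidableEq V] {G : SimpleGraph V} {W A : Finset V}
    (hA : MaxIndepIn G W A) {d : V} (hdW : d ∈ W) (hdA : d ∉ A) : ∃ a ∈ A, G.Adj d a := by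
  by_contra! hd
  have hins : insert d A = A :=
    hA.2.2 _ (insert_subset hdW hA.1) (hA.2.1.insert_of_forall_not_adj hd) (subset_insert _ _)
  exact hdA (hins ▸ mem_insert_self d A)

theorem notMem_FD_of_mem [Fintype V] [DecidableEq V] {G : SimpleGraph V} [DecidableRel G.Adj]
    {S D : Finset V} {v : V} (hv : v ∈ S) : v ∉ FD G S D := by
  simp [FD, hv]

theorem card_le_sum_tight_of_forall_exists_adj [Fintype V] [DecidableEq V]
    {G : SimpleGraph V} [DecidableRel G.Adj] {S D A : Finset V} (hD : D ⊆ S)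
    (hdom : ∀ d ∈ D, ∃ a ∈ A, G.Adj d a) : D.card ≤ ∑ a ∈ A, tight G S a := by
  have hcover : D ⊆ A.biUnion (fun a => G.neighborFinset a ∩ S) := by
    intro d hd
    obtain ⟨a, ha, hda⟩ := hdom d hd
    exact mem_biUnion.mpr ⟨a, ha, mem_inter.mpr ⟨(G.mem_neighborFinset _ _).mpr hda.symm, hD hd⟩⟩
  exact (card_le_card hcover).trans card_biUnion_le

theorem stmt_17_general [Fintype V] [DecidableEq V] (G : SimpleGraph V) [DecidableRel G.Adj]
    (S D A : Finset V) (hD : D ⊆ S)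
    (hA : A ⊆ FD G S D) (hAmax : MaxIndepIn G (D ∪ FD G S D) A) :
    (∀ d ∈ D, ∃ a ∈ A, G.Adj d a) ∧
    (∀ a b x y z : V, A = {a, b} → D = {x, y, z} → a ≠ b →
      x ≠ y → x ≠ z → y ≠ z →
      tight G S a = 1 → tight G S b = 1 → False) := by
  have hdom : ∀ d ∈ D, ∃ a ∈ A, G.Adj d a := fun d hd =>
    hAmax.exists_adj (mem_union_left _ hd) fun hdA => notMem_FD_of_mem (hD hd) (hA hdA)
  refine ⟨hdom, fun a b x y z hAab hDxyz hab hxy hxz hyz hta htb => ?_⟩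
  have hcard := card_le_sum_tight_of_forall_exists_adj hD hdom
  rw [hAab, sum_pair hab, hta, htb, hDxyz, card_eq_three.mpr ⟨x, y, z, hxy, hxz, hyz, rfl⟩] at hcard
  omega

theorem stmt_17 [Fintype V] [DecidableEq V] (G : SimpleGraph V) [DecidableRel G.Adj]
    (S D A : Finset V) (hS : MaxIndep G S) (hD : D ⊆ S)
    (hA : A ⊆ FD G S D) (hAmax : MaxIndepIn G (D ∪ FD G S D) A) :
    (∀ d ∈ D, ∃ a ∈ A, G.Adj d a) ∧
    (∀ a b x y z : V, A = {a, b} → D = {x, y, z} → a ≠ b →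
      x ≠ y → x ≠ z → y ≠ z →
      tight G S a = 1 → tight G S b = 1 → False) :=
  stmt_17_general G S D A hD hA hAmax
end

section
/- Let S be a maximal independent set and suppose D ⊆ S and A ⊆ F(D) are such that A is independent in G and every vertex of (D ∪ F(D)) \ A has a neighbor in A. Then (S \ D) ∪ A is a maximal independent set of G of size |S| − |D| + |A|. -/
open Finset

variable {V : Type*}

theorem stmt_18 [Fintype V] [DecidableEq V] (G : SimpleGraph V) [DecidableRel G.Adj]
    (S D A : Finset V) (hS : MaxIndep G S) (hD : D ⊆ S)
    (hA : A ⊆ FD G S D) (hAind : Indep G A)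
    (hdom : ∀ v ∈ (D ∪ FD G S D) \ A, ∃ a ∈ A, G.Adj a v) :
    MaxIndep G ((S \ D) ∪ A) ∧ ((S \ D) ∪ A).card = S.card - D.card + A.card := by
  have hAF : ∀ a ∈ A, a ∉ S ∧ G.neighborFinset a ∩ S ⊆ D := by
    intro a ha
    have := hA ha
    simp only [FD, mem_filter] at this
    exact this.2
  have hcross : ∀ a ∈ A, ∀ u ∈ S \ D, ¬ G.Adj a u := by
    intro a ha u hu hadj
    have hu' := mem_sdiff.mp hu
    have : u ∈ G.neighborFinset a ∩ S := by
      simp [SimpleGraph.mem_neighborFinset, hadj, hu'.1]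
    exact hu'.2 ((hAF a ha).2 this)
  have hindep : Indep G ((S \ D) ∪ A) := by
    intro u hu v hv hadj
    rcases mem_union.mp hu with hu | hu <;> rcases mem_union.mp hv with hv | hv
    · exact hS.1 u (mem_sdiff.mp hu).1 v (mem_sdiff.mp hv).1 hadj
    · exact hcross v hv u hu hadj.symm
    · exact hcross u hu v hv hadj
    · exact hAind u hu v hv hadj
  have hv_nbr : ∀ v, v ∉ S → ∃ u ∈ S, G.Adj u v := by
    intro v hvS
    by_contra h
    push_neg at h
    have hind : Indep G (insert v S) := by
      intro a ha b hb hadj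
      rcases mem_insert.mp ha with h1 | h1 <;> rcases mem_insert.mp hb with h2 | h2
      · exact hadj.ne (h1.trans h2.symm)
      · subst h1; exact h b h2 hadj.symm
      · subst h2; exact h a h1 hadj
      · exact hS.1 a h1 b h2 hadj
    have := hS.2 _ hind (subset_insert v S)
    exact hvS (this ▸ mem_insert_self v S)
  constructor
  · refine ⟨hindep, fun T hT hsub => ?_⟩
    ext v
    constructor
    · intro hvT
      by_contra hv
      have hnbr : ∃ a ∈ A, G.Adj a v := by
        by_cases hvS : v ∈ S
        · have hvD : v ∈ D := by
            by_contra hvD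
            exact hv (mem_union_left _ (mem_sdiff.mpr ⟨hvS, hvD⟩))
          apply hdom
          refine mem_sdiff.mpr ⟨mem_union_left _ hvD, fun hvA => hv (mem_union_right _ hvA)⟩
        · by_cases hall : G.neighborFinset v ∩ S ⊆ D
          · have hvF : v ∈ FD G S D := by
              simp only [FD, mem_filter, mem_univ, true_and]
              exact ⟨hvS, hall⟩
            apply hdom
            refine mem_sdiff.mpr ⟨mem_union_right _ hvF, fun hvA => hv (mem_union_right _ hvA)⟩
          · obtain ⟨u, hu, huD⟩ := not_subset.mp hall
            have hu' := mem_inter.mp hu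
            have huT : u ∈ T := hsub (mem_union_left _ (mem_sdiff.mpr ⟨hu'.2, huD⟩))
            have hadj : G.Adj v u := by
              simpa [SimpleGraph.mem_neighborFinset] using hu'.1
            exact absurd hadj.symm (hT u huT v hvT)
      obtain ⟨a, haA, hadj⟩ := hnbr
      exact hT a (hsub (mem_union_right _ haA)) v hvT hadj
    · intro hv; exact hsub hv
  · have hdisj : Disjoint (S \ D) A := by
      refine disjoint_left.mpr fun a ha haA => ?_
      exact (hAF a haA).1 (mem_sdiff.mp ha).1
    rw [card_union_of_disjoint hdisj, card_sdiff_of_subset hD]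
end
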